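/- Let d > −1 with d ≠ 0, let p be a probability vector on n ≥ 2 symbols, and let j be any index. Define o^d(p_j) = inf over positive integers μ of ( μ + (1/d)·log₂( p_j^(1+d) + (1−p_j)^(1+d)·(2^μ − 1)^(−d) ) ). Then for every codeword-length vector l, R^d(p,l) ≥ o^d(p_j); in particular the optimal exponential redundancy satisfies R^d_opt(p) ≥ o^d(p_j). -/

import Mathlib

open Real Finset

/-- A valid codeword-length vector: all lengths at least 1 and the Kraft inequality holds. -/
def IsCode (n : ℕ) (l : Fin n → ℕ) : Prop :=
  (∀ i, 1 ≤ l i) ∧ ∑ i, (2 : ℝ) ^ (-(l i : ℝ)) ≤ 1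

/-- Exponential redundancy `R^d(p,l)`. -/
noncomputable def expRedundancy (n : ℕ) (d : ℝ) (p : Fin n → ℝ) (l : Fin n → ℕ) : ℝ :=
  (1 / d) * Real.logb 2 (∑ i, (p i) ^ (1 + d) * (2 : ℝ) ^ (d * (l i : ℝ)))

/-- Optimal exponential redundancy `R^d_opt(p)`. -/
noncomputable def expRedundancyOpt (n : ℕ) (d : ℝ) (p : Fin n → ℝ) : ℝ :=
  sInf { r | ∃ l : Fin n → ℕ, IsCode n l ∧ r = expRedundancy n d p l }

/-- The lower-bound function `o^d(q)`. -/
noncomputable def lowerBound (d q : ℝ) : ℝ :=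
  sInf { r | ∃ μ : ℕ, 1 ≤ μ ∧
    r = (μ : ℝ) + (1 / d) * Real.logb 2
      (q ^ (1 + d) + (1 - q) ^ (1 + d) * ((2 : ℝ) ^ (μ : ℝ) - 1) ^ (-d)) }

/-! Write `b i = 2 ^ (-l i)`, so that the redundancy is `(1/d) log₂ ∑ pᵢ^(1+d) bᵢ^(-d)`. Since
`x ↦ x^(1+d)/d` is convex for every `d ≥ -1`, Jensen's inequality in perspective form shows that
`(∑ pᵢ^(1+d) bᵢ^(-d))/d` can only decrease when all symbols other than `j` are merged into a single
one of probability `1 - p j` and weight `∑_{i ≠ j} bᵢ`; as `x ↦ x^(-d)/d` is antitone, the Kraft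
bound `∑_{i ≠ j} bᵢ ≤ 1 - b j` decreases it further. The resulting binary sum at `u = 2^(-l j)` is
`2^(d l j)` times the argument of the logarithm in `o^d` at `μ = l j`. Working with `x/d` instead
of `x` treats both signs of `d` at once, because `x ↦ (1/d) log₂ x` turns `x/d ≤ y/d` into `≤`. -/

lemma antitoneOn_rpow_neg_div (d : ℝ) : AntitoneOn (fun x : ℝ => x ^ (-d) / d) (Set.Ioi 0) := by
  intro x hx y _ hxy
  rcases lt_trichotomy d 0 with hd | rfl | hd
  · exact div_le_div_of_nonpos_of_le hd.le (rpow_le_rpow (le_of_lt hx) hxy (by linarith))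
  · simp
  · exact div_le_div_of_nonneg_right (rpow_le_rpow_of_nonpos hx hxy (by linarith)) hd.le

lemma convexOn_rpow_one_add_div {d : ℝ} (hd : -1 ≤ d) :
    ConvexOn ℝ (Set.Ici 0) (fun x : ℝ => x ^ (1 + d) / d) := by
  rcases le_or_gt 0 d with hd0 | hd0
  · simpa only [div_eq_inv_mul, smul_eq_mul] using
      (convexOn_rpow (by linarith)).smul (inv_nonneg.2 hd0)
  · have h := (Real.concaveOn_rpow (p := 1 + d) (by linarith) (by linarith)).neg.smul
      (inv_nonneg.2 (neg_nonneg.2 hd0.le))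
    refine h.congr fun x _ => ?_
    simp only [Pi.neg_apply, smul_eq_mul]
    field_simp

lemma mul_div_rpow_one_add {x y : ℝ} (d : ℝ) (hx : 0 ≤ x) (hy : 0 < y) :
    y * (x / y) ^ (1 + d) = x ^ (1 + d) * y ^ (-d) := by
  rw [div_rpow hx hy.le, rpow_add hy, rpow_one, rpow_neg hy.le]
  field_simp

lemma rpow_sum_mul_rpow_sum_div_le {ι : Type*} {s : Finset ι} {d : ℝ} (hd : -1 ≤ d)
    {a b : ι → ℝ} (ha : ∀ i ∈ s, 0 ≤ a i) (hb : ∀ i ∈ s, 0 < b i) (hs : s.Nonempty) :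
    (∑ i ∈ s, a i) ^ (1 + d) * (∑ i ∈ s, b i) ^ (-d) / d ≤
      (∑ i ∈ s, a i ^ (1 + d) * b i ^ (-d)) / d := by
  set B := ∑ i ∈ s, b i
  have hB : 0 < B := Finset.sum_pos hb hs
  have jensen := (convexOn_rpow_one_add_div hd).map_sum_le (t := s) (w := fun i => b i / B)
    (p := fun i => a i / b i) (fun i hi => (div_pos (hb i hi) hB).le)
    (by rw [← Finset.sum_div, div_self hB.ne']) (fun i hi => div_nonneg (ha i hi) (hb i hi).le)
  have hmean : ∑ i ∈ s, b i / B * (a i / b i) = (∑ i ∈ s, a i) / B := by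
    rw [Finset.sum_div]
    exact Finset.sum_congr rfl fun i hi => by field_simp [(hb i hi).ne']
  simp only [smul_eq_mul, hmean] at jensen
  calc (∑ i ∈ s, a i) ^ (1 + d) * B ^ (-d) / d
      = B * (((∑ i ∈ s, a i) / B) ^ (1 + d) / d) := by
        rw [← mul_div_assoc, mul_div_rpow_one_add d (Finset.sum_nonneg ha) hB]
    _ ≤ B * ∑ i ∈ s, b i / B * ((a i / b i) ^ (1 + d) / d) := by gcongr
    _ = (∑ i ∈ s, a i ^ (1 + d) * b i ^ (-d)) / d := by
        rw [Finset.mul_sum, Finset.sum_div]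
        refine Finset.sum_congr rfl fun i hi => ?_
        rw [← mul_div_rpow_one_add d (ha i hi) (hb i hi)]
        field_simp

lemma one_div_mul_logb_le_of_div_le {b d x y : ℝ} (hb : 1 < b) (hd : d ≠ 0) (hx : 0 < x)
    (hy : 0 < y) (h : x / d ≤ y / d) : 1 / d * logb b x ≤ 1 / d * logb b y := by
  rcases hd.lt_or_gt with hd | hd
  · have hyx : y ≤ x := (div_le_div_right_of_neg hd).1 h
    exact mul_le_mul_of_nonpos_left (logb_le_logb_of_le hb hy hyx) (one_div_neg.2 hd).le
  · have hxy : x ≤ y := (div_le_div_iff_of_pos_right hd).1 h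
    exact mul_le_mul_of_nonneg_left (logb_le_logb_of_le hb hx hxy) (one_div_pos.2 hd).le

lemma merge_rpow_sum_div_le {ι : Type*} [Fintype ι] [DecidableEq ι] {d : ℝ} (hd : -1 ≤ d)
    {p b : ι → ℝ} (hp : ∀ i, 0 ≤ p i) (hpsum : ∑ i, p i = 1) (hb : ∀ i, 0 < b i)
    (hbsum : ∑ i, b i ≤ 1) {j k : ι} (hkj : k ≠ j) :
    (p j ^ (1 + d) * b j ^ (-d) + (1 - p j) ^ (1 + d) * (1 - b j) ^ (-d)) / d ≤
      (∑ i, p i ^ (1 + d) * b i ^ (-d)) / d := by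
  set s := univ.erase j
  have hs : s.Nonempty := ⟨k, mem_erase.2 ⟨hkj, mem_univ k⟩⟩
  have hps : ∑ i ∈ s, p i = 1 - p j := by rw [sum_erase_eq_sub (mem_univ j), hpsum]
  have hbs : ∑ i ∈ s, b i ≤ 1 - b j := by
    rw [sum_erase_eq_sub (mem_univ j)]; linarith
  have hrest : (1 - p j) ^ (1 + d) * (1 - b j) ^ (-d) / d ≤
      (∑ i ∈ s, p i ^ (1 + d) * b i ^ (-d)) / d :=
    calc (1 - p j) ^ (1 + d) * (1 - b j) ^ (-d) / d
        = (1 - p j) ^ (1 + d) * ((1 - b j) ^ (-d) / d) := mul_div_assoc _ _ _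
      _ ≤ (1 - p j) ^ (1 + d) * ((∑ i ∈ s, b i) ^ (-d) / d) := by
          have hbs_pos : 0 < ∑ i ∈ s, b i := sum_pos (fun i _ => hb i) hs
          refine mul_le_mul_of_nonneg_left ?_ (rpow_nonneg (hps ▸ sum_nonneg fun i _ => hp i) _)
          exact antitoneOn_rpow_neg_div d hbs_pos (hbs_pos.trans_le hbs) hbs
      _ = (∑ i ∈ s, p i) ^ (1 + d) * (∑ i ∈ s, b i) ^ (-d) / d := by rw [hps, mul_div_assoc]
      _ ≤ _ := rpow_sum_mul_rpow_sum_div_le hd (fun i _ => hp i) (fun i _ => hb i) hs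
  rw [← add_sum_erase _ _ (mem_univ j), add_div, add_div]
  linarith

noncomputable def binaryPowerSum (d q u : ℝ) : ℝ := q ^ (1 + d) * u ^ (-d) + (1 - q) ^ (1 + d) * (1 - u) ^ (-d)

lemma binaryPowerSum_pos {d q u : ℝ} (hq0 : 0 < q) (hq1 : q ≤ 1) (hu0 : 0 < u) (hu1 : u < 1) :
    0 < binaryPowerSum d q u :=
  add_pos_of_pos_of_nonneg (mul_pos (rpow_pos_of_pos hq0 _) (rpow_pos_of_pos hu0 _))
    (mul_nonneg (rpow_nonneg (sub_nonneg.2 hq1) _) (rpow_nonneg (sub_nonneg.2 hu1.le) _))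

lemma add_rpow_div_le_binaryPowerSum_div {d q u : ℝ} (hq0 : 0 ≤ q) (hq1 : q ≤ 1) (hu0 : 0 < u)
    (hu1 : u < 1) : (q ^ (1 + d) + (1 - q) ^ (1 + d)) / d ≤ binaryPowerSum d q u / d := by
  have h1 : (1 : ℝ) ∈ Set.Ioi 0 := Set.mem_Ioi.2 one_pos
  have hu : 1 / d ≤ u ^ (-d) / d := by
    simpa using antitoneOn_rpow_neg_div d hu0 h1 hu1.le
  have hu' : 1 / d ≤ (1 - u) ^ (-d) / d := by
    simpa using antitoneOn_rpow_neg_div d (sub_pos.2 hu1) h1 (by linarith)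
  have hq : 0 ≤ q ^ (1 + d) := rpow_nonneg hq0 _
  have hq' : 0 ≤ (1 - q) ^ (1 + d) := rpow_nonneg (sub_nonneg.2 hq1) _
  calc (q ^ (1 + d) + (1 - q) ^ (1 + d)) / d
      = q ^ (1 + d) * (1 / d) + (1 - q) ^ (1 + d) * (1 / d) := by ring
    _ ≤ q ^ (1 + d) * (u ^ (-d) / d) + (1 - q) ^ (1 + d) * ((1 - u) ^ (-d) / d) := by gcongr
    _ = binaryPowerSum d q u / d := by rw [binaryPowerSum]; ring

lemma lowerBound_term_eq {d q μ : ℝ} (hd : d ≠ 0) (hq0 : 0 < q) (hq1 : q ≤ 1) (hμ : 0 < μ) :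
    μ + 1 / d * logb 2 (q ^ (1 + d) + (1 - q) ^ (1 + d) * ((2 : ℝ) ^ μ - 1) ^ (-d)) =
      1 / d * logb 2 (binaryPowerSum d q ((2 : ℝ) ^ (-μ))) := by
  have h2μ : 0 < (2 : ℝ) ^ μ - 1 := sub_pos.2 (one_lt_rpow one_lt_two hμ)
  have hpow : ((2 : ℝ) ^ (-μ)) ^ (-d) = (2 : ℝ) ^ (d * μ) := by
    rw [← rpow_mul zero_le_two]; ring_nf
  have hsub : 1 - (2 : ℝ) ^ (-μ) = ((2 : ℝ) ^ μ - 1) * (2 : ℝ) ^ (-μ) := by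
    rw [rpow_neg zero_le_two]; field_simp
  have hE : 0 < q ^ (1 + d) + (1 - q) ^ (1 + d) * ((2 : ℝ) ^ μ - 1) ^ (-d) :=
    add_pos_of_pos_of_nonneg (rpow_pos_of_pos hq0 _)
      (mul_nonneg (rpow_nonneg (sub_nonneg.2 hq1) _) (rpow_nonneg h2μ.le _))
  rw [binaryPowerSum, hsub, mul_rpow h2μ.le (rpow_nonneg zero_le_two _), hpow,
    show ∀ a b c e : ℝ, a * e + b * (c * e) = e * (a + b * c) by intros; ring,
    logb_mul (rpow_pos_of_pos two_pos _).ne' hE.ne', logb_rpow two_pos (by norm_num)]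
  field_simp

lemma lowerBound_le {d q : ℝ} (hd : d ≠ 0) (hq0 : 0 < q) (hq1 : q ≤ 1) {μ : ℕ} (hμ : 1 ≤ μ) :
    lowerBound d q ≤
      μ + 1 / d * logb 2 (q ^ (1 + d) + (1 - q) ^ (1 + d) * ((2 : ℝ) ^ (μ : ℝ) - 1) ^ (-d)) := by
  refine csInf_le ⟨1 / d * logb 2 (q ^ (1 + d) + (1 - q) ^ (1 + d)), ?_⟩ ⟨μ, hμ, rfl⟩
  rintro _ ⟨ν, hν, rfl⟩
  have hν0 : (0 : ℝ) < ν := by exact_mod_cast hν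
  have hu1 : (2 : ℝ) ^ (-(ν : ℝ)) < 1 := rpow_lt_one_of_one_lt_of_neg one_lt_two (by linarith)
  have hu0 : 0 < (2 : ℝ) ^ (-(ν : ℝ)) := rpow_pos_of_pos two_pos _
  rw [lowerBound_term_eq hd hq0 hq1 hν0]
  exact one_div_mul_logb_le_of_div_le one_lt_two hd
    (add_pos_of_pos_of_nonneg (rpow_pos_of_pos hq0 _) (rpow_nonneg (sub_nonneg.2 hq1) _))
    (binaryPowerSum_pos hq0 hq1 hu0 hu1) (add_rpow_div_le_binaryPowerSum_div hq0.le hq1 hu0 hu1)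

theorem lowerBound_le_expRedundancy {n : ℕ} {d : ℝ} (hd : -1 ≤ d) (hd0 : d ≠ 0) {p : Fin n → ℝ}
    (hp : ∀ i, 0 < p i) (hpsum : ∑ i, p i = 1) {j k : Fin n} (hkj : k ≠ j) {l : Fin n → ℕ}
    (hl : IsCode n l) : lowerBound d (p j) ≤ expRedundancy n d p l := by
  set b : Fin n → ℝ := fun i => (2 : ℝ) ^ (-(l i : ℝ))
  have hb : ∀ i, 0 < b i := fun i => rpow_pos_of_pos two_pos _
  have hq1 : p j ≤ 1 := hpsum ▸ single_le_sum (fun i _ => (hp i).le) (mem_univ j)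
  have hμ : (0 : ℝ) < l j := by exact_mod_cast hl.1 j
  have hbj : b j < 1 := rpow_lt_one_of_one_lt_of_neg one_lt_two (by linarith)
  have hexp : expRedundancy n d p l = 1 / d * logb 2 (∑ i, p i ^ (1 + d) * b i ^ (-d)) := by
    simp only [expRedundancy, b, ← rpow_mul zero_le_two, neg_mul_neg, mul_comm]
  calc lowerBound d (p j)
      ≤ l j + 1 / d * logb 2
          (p j ^ (1 + d) + (1 - p j) ^ (1 + d) * ((2 : ℝ) ^ (l j : ℝ) - 1) ^ (-d)) :=
        lowerBound_le hd0 (hp j) hq1 (hl.1 j)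
    _ = 1 / d * logb 2 (binaryPowerSum d (p j) (b j)) := lowerBound_term_eq hd0 (hp j) hq1 hμ
    _ ≤ 1 / d * logb 2 (∑ i, p i ^ (1 + d) * b i ^ (-d)) :=
        one_div_mul_logb_le_of_div_le one_lt_two hd0 (binaryPowerSum_pos (hp j) hq1 (hb j) hbj)
          (sum_pos (fun i _ => mul_pos (rpow_pos_of_pos (hp i) _) (rpow_pos_of_pos (hb i) _))
            ⟨j, mem_univ j⟩)
          (merge_rpow_sum_div_le hd (fun i => (hp i).le) hpsum hb hl.2 hkj)
    _ = expRedundancy n d p l := hexp.symm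

lemma isCode_const {n : ℕ} (hn : 1 ≤ n) : IsCode n (fun _ => n) := by
  refine ⟨fun _ => hn, ?_⟩
  rw [sum_const, card_univ, Fintype.card_fin, nsmul_eq_mul, rpow_neg zero_le_two,
    rpow_natCast, mul_inv_le_iff₀ (by positivity), one_mul]
  exact_mod_cast Nat.lt_two_pow_self.le

theorem stmt_5 (n : ℕ) (hn : 2 ≤ n) (d : ℝ) (hd : -1 < d) (hd0 : d ≠ 0)
    (p : Fin n → ℝ) (hp : ∀ i, 0 < p i) (hpsum : ∑ i, p i = 1) (j : Fin n) :
    (∀ l : Fin n → ℕ, IsCode n l → lowerBound d (p j) ≤ expRedundancy n d p l) ∧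
    lowerBound d (p j) ≤ expRedundancyOpt n d p := by
  obtain ⟨k, hkj⟩ : ∃ k, k ≠ j := Fintype.exists_ne_of_one_lt_card (by rw [Fintype.card_fin]; omega) j
  have hbound : ∀ l, IsCode n l → lowerBound d (p j) ≤ expRedundancy n d p l :=
    fun l hl => lowerBound_le_expRedundancy hd.le hd0 hp hpsum hkj hl
  refine ⟨hbound, le_csInf ⟨_, _, isCode_const (by omega), rfl⟩ ?_⟩
  rintro _ ⟨l, hl, rfl⟩
  exact hbound l hl
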